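/- arXiv:1601.08110 — 2 statements merged into one kernel-verified Lean document; each statement's English description precedes it below -/
import Mathlib

section
/- Let h2X1, h2X2, h21X1, h21X2, k, ℓ, hV11, hV21, hW11, hW21, chiV, chiW be integers satisfying: hV11 = h2X1 + h2X2 − k − 1; hV21 = 21 + h21X1 + h21X2 − k; hW11 = 1 + h21X1 + h21X2 + ℓ; chiV = 2·hV11 − 2·hV21; chiW = 2·hW11 − 2·hW21; and chiW = −chiV. Then hW21 = ℓ − 21 + h2X1 + h2X2, and moreover (hV11 = hW21 and hV21 = hW11) holds if and only if ℓ + k = 20. -/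
/-- The arithmetic consequence proved in Section 2.3: given Lee's formulas for the Hodge
numbers of the smoothing `V`, the formula for `h^{1,1}(W)` of the glued Landau-Ginzburg
models, the Euler characteristic formulas for Calabi-Yau threefolds, and the mirror relation
`χ(W) = -χ(V)`, one has `h^{2,1}(W) = ℓ - 21 + h²(X₁) + h²(X₂)`, and `V` and `W` are
topologically mirror if and only if `ℓ + k = 20`. -/
theorem threefold_mirror_criterion
    (h2X1 h2X2 h21X1 h21X2 k ℓ hV11 hV21 hW11 hW21 chiV chiW : ℤ)
    (e1 : hV11 = h2X1 + h2X2 - k - 1)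
    (e2 : hV21 = 21 + h21X1 + h21X2 - k)
    (e3 : hW11 = 1 + h21X1 + h21X2 + ℓ)
    (e4 : chiV = 2 * hV11 - 2 * hV21)
    (e5 : chiW = 2 * hW11 - 2 * hW21)
    (e6 : chiW = -chiV) :
    hW21 = ℓ - 21 + h2X1 + h2X2 ∧ ((hV11 = hW21 ∧ hV21 = hW11) ↔ ℓ + k = 20) := by
  subst e1 e2 e3 e4 e5; refine ⟨by omega, ?_⟩; omega
end

section
/- Let S be a finite set of nonzero lattice points in ℝ^d and let P = P(S) = {u ∈ ℝ^d : ⟨v,u⟩ ≥ −1 for all v ∈ S}. Then the lattice points of the topological interior of the Minkowski sum P + P are exactly the lattice points of P; that is, for every u ∈ ℤ^d, u ∈ interior(P + P) if and only if ⟨v,u⟩ ≥ −1 for all v ∈ S. -/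
open Pointwise

/-- The case `Q = Δ°` of the Lemma in the proof of Proposition 3.9: for a polytope
`P = {u : ⟨v,u⟩ ≥ -1 for all v ∈ S}` cut out by a finite set `S` of nonzero lattice points,
the lattice points of the interior of the Minkowski sum `P + P` are exactly the lattice
points of `P`. -/
theorem lattice_points_interior_double (d : ℕ) (hd : 0 < d)
    (S : Finset (Fin d → ℤ)) (hS : ∀ v ∈ S, v ≠ 0) :
    ∀ u : Fin d → ℤ,
      ((fun i => (u i : ℝ)) ∈ interior
        ({u' : Fin d → ℝ | ∀ v ∈ S, -1 ≤ ∑ i, (v i : ℝ) * u' i} +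
         {u' : Fin d → ℝ | ∀ v ∈ S, -1 ≤ ∑ i, (v i : ℝ) * u' i})) ↔
      ∀ v ∈ S, -1 ≤ ∑ i, (v i : ℝ) * (u i : ℝ) := by
  intro u
  constructor
  · intro h v hv
    obtain ⟨ε, hε, hball⟩ := Metric.isOpen_iff.mp isOpen_interior _ h
    set w : Fin d → ℝ := fun i => (v i : ℝ) with hw
    have hwne : w ≠ 0 := by
      intro hc
      apply hS v hv
      funext i
      have hwi : w i = 0 := by simpa using congrFun hc i
      have : (v i : ℝ) = 0 := hwi
      exact_mod_cast this
    have hwnorm : 0 < ‖w‖ := norm_pos_iff.mpr hwne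
    have hvv : 0 < ∑ i, (v i : ℝ) * w i := by
      have hex : ∃ i, v i ≠ 0 := by
        by_contra hc; push_neg at hc; exact hS v hv (funext hc)
      obtain ⟨i, hi⟩ := hex
      apply Finset.sum_pos' (fun j _ => mul_self_nonneg _)
      refine ⟨i, Finset.mem_univ i, mul_self_pos.mpr ?_⟩
      exact_mod_cast hi
    set t : ℝ := ε / (2 * ‖w‖) with ht
    have htpos : 0 < t := by positivity
    set p : Fin d → ℝ := (fun i => (u i : ℝ)) - t • w with hp
    have hpball : p ∈ Metric.ball (fun i => (u i : ℝ)) ε := by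
      rw [Metric.mem_ball, dist_eq_norm]
      have : p - (fun i => (u i : ℝ)) = -(t • w) := by
        rw [hp]; abel
      rw [this, norm_neg, norm_smul, Real.norm_eq_abs, abs_of_pos htpos, ht]
      rw [div_mul_eq_mul_div]
      rw [div_lt_iff₀ (by positivity)]
      nlinarith
    have hpmem := hball hpball
    have hpPP := interior_subset hpmem
    obtain ⟨a, ha, b, hb, hab⟩ := hpPP
    have hsum : -2 ≤ ∑ i, (v i : ℝ) * p i := by
      have h1 := ha v hv
      have h2 := hb v hv
      have : ∑ i, (v i : ℝ) * p i = (∑ i, (v i : ℝ) * a i) + ∑ i, (v i : ℝ) * b i := by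
        rw [← Finset.sum_add_distrib]
        apply Finset.sum_congr rfl
        intro i _
        have : p i = a i + b i := by rw [← hab]; rfl
        rw [this]; ring
      linarith [this ▸ add_le_add h1 h2]
    have hpi : ∑ i, (v i : ℝ) * p i
        = (∑ i, (v i : ℝ) * (u i : ℝ)) - t * ∑ i, (v i : ℝ) * w i := by
      rw [Finset.mul_sum, ← Finset.sum_sub_distrib]
      apply Finset.sum_congr rfl
      intro i _
      simp only [hp, Pi.sub_apply, Pi.smul_apply, smul_eq_mul]
      ring
    have hstrict : -2 < ∑ i, (v i : ℝ) * (u i : ℝ) := by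
      rw [hpi] at hsum
      nlinarith
    -- integrality
    have hcast : ((∑ i, v i * u i : ℤ) : ℝ) = ∑ i, (v i : ℝ) * (u i : ℝ) := by
      push_cast; ring
    rw [← hcast] at hstrict ⊢
    have : (-2 : ℤ) < ∑ i, v i * u i := by exact_mod_cast hstrict
    have : (-1 : ℤ) ≤ ∑ i, v i * u i := by omega
    exact_mod_cast this
  · intro h
    apply mem_interior.mpr
    refine ⟨{w : Fin d → ℝ | ∀ v ∈ S, -2 < ∑ i, (v i : ℝ) * w i}, ?_, ?_, ?_⟩
    · intro w hwmem
      refine ⟨(1/2 : ℝ) • w, ?_, (1/2 : ℝ) • w, ?_, ?_⟩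
      · intro v hv
        have := hwmem v hv
        have hcalc : ∑ i, (v i : ℝ) * ((1/2 : ℝ) • w) i
            = (1/2) * ∑ i, (v i : ℝ) * w i := by
          rw [Finset.mul_sum]
          apply Finset.sum_congr rfl
          intro i _
          simp only [Pi.smul_apply, smul_eq_mul]; ring
        rw [hcalc]; linarith
      · intro v hv
        have := hwmem v hv
        have hcalc : ∑ i, (v i : ℝ) * ((1/2 : ℝ) • w) i
            = (1/2) * ∑ i, (v i : ℝ) * w i := by
          rw [Finset.mul_sum]
          apply Finset.sum_congr rfl
          intro i _
          simp only [Pi.smul_apply, smul_eq_mul]; ring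
        rw [hcalc]; linarith
      · show (1/2 : ℝ) • w + (1/2 : ℝ) • w = w
        rw [← add_smul]; norm_num
    · have heq : {w : Fin d → ℝ | ∀ v ∈ S, -2 < ∑ i, (v i : ℝ) * w i}
          = ⋂ v ∈ S, {w : Fin d → ℝ | -2 < ∑ i, (v i : ℝ) * w i} := by
        ext x; simp
      rw [heq]
      apply isOpen_biInter_finset
      intro v hv
      exact isOpen_lt continuous_const
        (continuous_finset_sum _ fun i _ => continuous_const.mul (continuous_apply i))
    · intro v hv
      have := h v hv
      simpa using lt_of_lt_of_le (by norm_num : (-2:ℝ) < -1) this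
end
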